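/- Let f_m : 𝓨 → [0,1] be probability mass functions on a finite set 𝓨 for m in a finite set of K mediator values. With p_m > 0, Σ p_m = 1, and γ_m = (1/p_m)/(Σ_{m'} 1/p_{m'}), the conditional outcome distribution given observation, P(Y=y | O=1) = Σ_m P(M=m|O=1) f_m(y), equals (1/K) Σ_m f_m(y), which is independent of the choice of the probability vector (p_m). -/

import Mathlib

open scoped BigOperators Classical

/-- Probability of the event `S` under the weight function `p` on a finite sample space. -/
noncomputable def Pr {Ω : Type*} [Fintype Ω] (p : Ω → ℝ) (S : Ω → Prop) : ℝ :=
  ∑ ω, if S ω then p ω else 0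

/-- Conditional probability `P(S | T)` (by convention `0` if `P(T) = 0`). -/
noncomputable def CPr {Ω : Type*} [Fintype Ω] (p : Ω → ℝ) (S T : Ω → Prop) : ℝ :=
  Pr p (fun ω => S ω ∧ T ω) / Pr p T

/-- Conditional expectation `E[Y | S]` (by convention `0` if `P(S) = 0`). -/
noncomputable def CExp {Ω : Type*} [Fintype Ω] (p : Ω → ℝ) (Y : Ω → ℝ) (S : Ω → Prop) : ℝ :=
  (∑ ω, if S ω then p ω * Y ω else 0) / Pr p S

lemma Pr_congr {Ω : Type*} [Fintype Ω] (q : Ω → ℝ) {S T : Ω → Prop}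
    (h : ∀ ω, S ω ↔ T ω) : Pr q S = Pr q T := by
  unfold Pr
  exact Finset.sum_congr rfl fun ω _ => by simp [h ω]

lemma Pr_fiber {Ω I : Type*} [Fintype Ω] [Fintype I] (q : Ω → ℝ)
    (S : Ω → Prop) (X : Ω → I) :
    Pr q S = ∑ i, Pr q (fun ω => S ω ∧ X ω = i) := by
  unfold Pr
  rw [Finset.sum_comm]
  refine Finset.sum_congr rfl fun ω _ => ?_
  by_cases h : S ω <;> simp [h]

/-- **The observed outcome distribution is independent of the mediator distribution.**
With `M ∈ {1,…,K}` having distribution `p` (all `p_m > 0`), conditional outcome pmfs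
`f_m` on a finite set `𝓨`, and observation probabilities
`P(O=1 | M=m, Y=y) = γ_m := (1/p_m)/(Σ_{m'} 1/p_{m'})` (so in particular `O ⟂ Y | M`),
the conditional outcome distribution given observation satisfies
`P(Y=y | O=1) = (1/K) Σ_m f_m(y)`, independently of the probability vector `p`. -/
theorem observed_outcome_distribution_uniform_mixture
    {Ω 𝓨 : Type*} [Fintype Ω] [Fintype 𝓨] (K : ℕ)
    (q : Ω → ℝ) (hq0 : ∀ ω, 0 ≤ q ω) (hq1 : ∑ ω, q ω = 1)
    (M : Ω → Fin K) (Y : Ω → 𝓨) (O : Ω → ℕ)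
    (hO : ∀ ω, O ω = 0 ∨ O ω = 1)
    (p : Fin K → ℝ) (hppos : ∀ m, 0 < p m) (hpsum : ∑ m, p m = 1)
    (hK : 0 < K)
    (hM : ∀ m, Pr q (fun ω => M ω = m) = p m)
    (f : Fin K → 𝓨 → ℝ)
    (hf0 : ∀ m y, 0 ≤ f m y) (hf1 : ∀ m, ∑ y : 𝓨, f m y = 1)
    -- P(Y=y | M=m) = f m y, in multiplicative form
    (hYM : ∀ m y, Pr q (fun ω => Y ω = y ∧ M ω = m) = f m y * p m)
    -- P(O=1 | M=m, Y=y) = γ_m (does not depend on y), in multiplicative form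
    (hγ : ∀ m y, Pr q (fun ω => O ω = 1 ∧ M ω = m ∧ Y ω = y)
            = ((1 / p m) / (∑ m' : Fin K, 1 / p m')) *
                Pr q (fun ω => M ω = m ∧ Y ω = y)) :
    ∀ y : 𝓨, CPr q (fun ω => Y ω = y) (fun ω => O ω = 1)
        = (1 / K) * ∑ m : Fin K, f m y := by

  intro y
  set S := ∑ m' : Fin K, 1 / p m' with hSdef
  have hSpos : 0 < S := by
    apply Finset.sum_pos
    · intro m _; exact one_div_pos.2 (hppos m)
    · haveI : Nonempty (Fin K) := ⟨⟨0, hK⟩⟩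
      exact Finset.univ_nonempty
  have hSne : S ≠ 0 := ne_of_gt hSpos
  have hKne : (K : ℝ) ≠ 0 := Nat.cast_ne_zero.2 hK.ne'
  have key : ∀ y' : 𝓨, Pr q (fun ω => O ω = 1 ∧ Y ω = y')
      = (∑ m : Fin K, f m y') / S := by
    intro y'
    rw [Pr_fiber q _ M]
    rw [Finset.sum_div]
    refine Finset.sum_congr rfl fun m _ => ?_
    have h1 : Pr q (fun ω => (O ω = 1 ∧ Y ω = y') ∧ M ω = m)
        = Pr q (fun ω => O ω = 1 ∧ M ω = m ∧ Y ω = y') :=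
      Pr_congr q (fun ω => by tauto)
    have h2 : Pr q (fun ω => M ω = m ∧ Y ω = y')
        = Pr q (fun ω => Y ω = y' ∧ M ω = m) :=
      Pr_congr q (fun ω => by tauto)
    rw [h1, hγ m y', h2, hYM m y']
    have hpne : p m ≠ 0 := (hppos m).ne'
    field_simp
  have hnum : Pr q (fun ω => Y ω = y ∧ O ω = 1)
      = (∑ m : Fin K, f m y) / S := by
    rw [Pr_congr q (fun ω => (and_comm : (Y ω = y ∧ O ω = 1) ↔ _)), key y]
  have hden : Pr q (fun ω => O ω = 1) = (K : ℝ) / S := by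
    rw [Pr_fiber q _ Y]
    simp only [key]
    rw [← Finset.sum_div, Finset.sum_comm]
    simp [hf1, Finset.card_univ]
  rw [CPr, hnum, hden]
  field_simp
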